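/- Let (X,d) be an ultra-metric space, fix x₀ ∈ X, and extend d to X̄ = X ∪ X⁻¹ ∪ {e} by setting d(x,e) = max{d(x,x₀), 1} for x ∈ X, d(x⁻¹,y⁻¹) = d(x,y) and d(x⁻¹,y) = d(x,y⁻¹) = max{d(x,e), d(y,e)} for all x,y ∈ X ∪ {e}. Let δ_u be the associated Graev ultra-metric on F(X), let 0 < ε < 1 and E = {(x,y) ∈ X × X : d(x,y) < ε}. If w* = x₀⋯xₙ and v = y₀⋯yₙ are words in W(X) of equal length with v' = e and d(x_i,y_i) < ε for all 0 ≤ i ≤ n, then the reduced word (w*)' belongs to the subgroup [Ẽ]. Consequently B_{δ_u}(e,ε) ⊆ [Ẽ]. -/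

import Mathlib

/-! Graev ultra-metrics on free groups (after Gao, Savchenko–Zarichnyi and
Shlossberg, "On Graev type ultra-metrics"). -/

namespace GraevStmt

variable {X : Type*}

/-- The alphabet `X̄ = X ∪ X⁻¹ ∪ {e}`: `none` is the letter `e`,
`some (x, true)` is the letter `x` and `some (x, false)` is the letter `x⁻¹`. -/
abbrev Letter (X : Type*) := Option (X × Bool)

/-- The letter `e`. -/
def eL : Letter X := none

/-- The letter `x`, for `x ∈ X`. -/
def pos (x : X) : Letter X := some (x, true)

/-- The letter `x⁻¹`, for `x ∈ X`. -/
def neg (x : X) : Letter X := some (x, false)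

/-- The formal inverse of a letter; `e⁻¹ = e` and `(x⁻¹)⁻¹ = x`. -/
def linv : Letter X → Letter X
  | none => none
  | some (x, b) => some (x, !b)

/-- Interpretation of a letter as an element of the free group `F(X)`. -/
def toF : Letter X → FreeGroup X
  | none => 1
  | some (x, b) => FreeGroup.mk [(x, b)]

/-- The reduced word of a word `w ∈ W(X)` over the alphabet `X̄`, viewed as the
corresponding element of the free group `F(X)`. -/
def red (w : List (Letter X)) : FreeGroup X := (w.map toF).prod

/-- The canonical irreducible word over the alphabet `X̄` representing a given
element of the free group `F(X)`. -/
def wordOf [DecidableEq X] (w : FreeGroup X) : List (Letter X) :=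
  w.toWord.map some

/-- `ρ_u(w, v)`: the maximum of the distances between corresponding letters of
two words of equal length. -/
def rho (d : Letter X → Letter X → ℝ) (w v : List (Letter X)) : ℝ :=
  (List.zipWith d w v).foldr max 0

/-- The Graev ultra-metric `δ_u` on `F(X)` associated with `d`:
`δ_u(w, v) = inf {ρ_u(w*, v*) : lh(w*) = lh(v*), (w*)' = w, (v*)' = v}`. -/
noncomputable def graev (d : Letter X → Letter X → ℝ) (w v : FreeGroup X) : ℝ :=
  sInf {r : ℝ | ∃ w' v' : List (Letter X), w'.length = v'.length ∧
    red w' = w ∧ red v' = v ∧ r = rho d w' v'}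

/-- `d` is an ultra-metric: symmetric, vanishing exactly on the diagonal and
satisfying the strong triangle inequality. -/
def IsUltraMetric {A : Type*} (d : A → A → ℝ) : Prop :=
  (∀ a b, d a b = d b a) ∧ (∀ a b, d a b = 0 ↔ a = b) ∧
    ∀ a b c, d a c ≤ max (d a b) (d b c)

/-- An admissible ultra-metric on the alphabet `X̄`, i.e. an ultra-metric with
`d(x⁻¹, y⁻¹) = d(x, y)`, `d(x, e) = d(x⁻¹, e)` and `d(x⁻¹, y) = d(x, y⁻¹)`. -/
def IsAdmissible (d : Letter X → Letter X → ℝ) : Prop :=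
  IsUltraMetric d ∧ (∀ x y : X, d (neg x) (neg y) = d (pos x) (pos y)) ∧
    (∀ x : X, d (pos x) eL = d (neg x) eL) ∧
    ∀ x y : X, d (neg x) (pos y) = d (pos x) (neg y)

/-- A function `R` on `F(X) × F(X)` is (two-sided) invariant if
`R(uwv, uw'v) = R(w, w')` for all `u, v, w, w'`. -/
def IsInvariant (R : FreeGroup X → FreeGroup X → ℝ) : Prop :=
  ∀ u v w w' : FreeGroup X, R (u * w * v) (u * w' * v) = R w w'

/-- A match on `{0, …, n-1}`: an involution `θ` such that there are no
`i < j < θ(i) < θ(j)`. -/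
def IsMatch {n : ℕ} (θ : Fin n → Fin n) : Prop :=
  (∀ i, θ (θ i) = i) ∧ ∀ i j : Fin n, ¬(i < j ∧ j < θ i ∧ θ i < θ j)

/-- The word `w^θ` associated with a word `w` and a match `θ`:
its `i`-th letter is `x_i` if `θ(i) > i`, `e` if `θ(i) = i`, and
`x_{θ(i)}⁻¹` if `θ(i) < i`. -/
def matchWord (w : List (Letter X)) (θ : Fin w.length → Fin w.length) :
    List (Letter X) :=
  List.ofFn fun i => if i < θ i then w.get i
    else if θ i = i then eL else linv (w.get (θ i))

/-- `j₂(x, y) = x⁻¹y`. -/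
def j2 (p : X × X) : FreeGroup X := (FreeGroup.of p.1)⁻¹ * FreeGroup.of p.2

/-- `j₂*(x, y) = xy⁻¹`. -/
def j2s (p : X × X) : FreeGroup X := FreeGroup.of p.1 * (FreeGroup.of p.2)⁻¹

/-- `ε̃ = ⋃_{w ∈ F(X)} w (j₂(ε) ∪ j₂*(ε)) w⁻¹` for `ε ⊆ X × X`. -/
def tilde (S : Set (X × X)) : Set (FreeGroup X) :=
  ⋃ w : FreeGroup X, (fun g => w * g * w⁻¹) '' (j2 '' S ∪ j2s '' S)

/-- The extension of an ultra-metric `d` on `X` to the alphabet `X̄` determined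
by a base point `x₀`: `d(x, e) = max {d(x, x₀), 1}`, `d(x⁻¹, y⁻¹) = d(x, y)`
and `d(x⁻¹, y) = d(x, y⁻¹) = max {d(x, e), d(y, e)}` for `x, y ∈ X ∪ {e}`. -/
def ext (d : X → X → ℝ) (x₀ : X) : Letter X → Letter X → ℝ
  | none, none => 0
  | some (x, _), none => max (d x x₀) 1
  | none, some (y, _) => max (d y x₀) 1
  | some (x, true), some (y, true) => d x y
  | some (x, false), some (y, false) => d x y
  | some (x, _), some (y, _) => max (max (d x x₀) 1) (max (d y x₀) 1)

/-- The extension of an ultra-metric `d` of diameter at most `1` on `X` to the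
alphabet `X̄`, with `d(x⁻¹, y⁻¹) = d(x, y)` and
`d(x⁻¹, y) = d(x, y⁻¹) = d(x, e) = d(x⁻¹, e) = 1`. -/
def extOne (d : X → X → ℝ) : Letter X → Letter X → ℝ
  | none, none => 0
  | some (x, true), some (y, true) => d x y
  | some (x, false), some (y, false) => d x y
  | _, _ => 1

/-- The homomorphism `α : F(X) → ℤ` extending the constant map `X → {1} ⊆ ℤ`. -/
def alpha (w : FreeGroup X) : ℤ :=
  Multiplicative.toAdd ((FreeGroup.lift fun _ : X => Multiplicative.ofAdd (1 : ℤ)) w)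

/-- `F(q_r) : F(X) → F(X/F_r)`, where `X/F_r` is the quotient of `X` by the
partition into open balls of radius `r` (for an ultra-metric the relation
`d x y < r` is an equivalence relation, so `Quot` of this relation is exactly
this quotient) and `q_r` is the quotient map. -/
def Fq (d : X → X → ℝ) (r : ℝ) :
    FreeGroup X →* FreeGroup (Quot fun x y : X => d x y < r) :=
  FreeGroup.map (Quot.mk _)

/-- The Savchenko–Zarichnyi function `d̂` on `F(X) × F(X)`:
`d̂(v, w) = 1` if `α(v) ≠ α(w)`, and
`d̂(v, w) = inf {r > 0 : F(q_r)(v) = F(q_r)(w)}` if `α(v) = α(w)`. -/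
noncomputable def dHat (d : X → X → ℝ) (v w : FreeGroup X) : ℝ :=
  if alpha v = alpha w then sInf {r : ℝ | 0 < r ∧ Fq d r v = Fq d r w} else 1

section Aux

variable {X : Type*}

lemma red_nil : red ([] : List (Letter X)) = 1 := rfl

lemma red_cons (a : Letter X) (w : List (Letter X)) :
    red (a :: w) = toF a * red w := by simp [red]

lemma conj_mem_tilde {S : Set (X × X)} {h : FreeGroup X} (hh : h ∈ tilde S)
    (g : FreeGroup X) : g * h * g⁻¹ ∈ tilde S := by
  rcases Set.mem_iUnion.1 hh with ⟨u, a, ha, rfl⟩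
  exact Set.mem_iUnion.2 ⟨g * u, a, ha, by group⟩

lemma conj_mem_closure_tilde {S : Set (X × X)} {h : FreeGroup X}
    (hh : h ∈ Subgroup.closure (tilde S)) (g : FreeGroup X) :
    g * h * g⁻¹ ∈ Subgroup.closure (tilde S) := by
  induction hh using Subgroup.closure_induction with
  | mem x hx => exact Subgroup.subset_closure (conj_mem_tilde hx g)
  | one => simpa using Subgroup.one_mem _
  | mul x y hx hy ihx ihy =>
      have : g * (x * y) * g⁻¹ = (g * x * g⁻¹) * (g * y * g⁻¹) := by group
      rw [this]; exact Subgroup.mul_mem _ ihx ihy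
  | inv x hx ihx =>
      have : g * x⁻¹ * g⁻¹ = (g * x * g⁻¹)⁻¹ := by group
      rw [this]; exact Subgroup.inv_mem _ ihx

lemma prod_mul_inv_mem {S : Set (X × X)} :
    ∀ {w v : List (Letter X)},
      List.Forall₂ (fun a b => toF a * (toF b)⁻¹ ∈ Subgroup.closure (tilde S)) w v →
      red w * (red v)⁻¹ ∈ Subgroup.closure (tilde S) := by
  intro w v h
  induction h with
  | nil => simpa [red_nil] using Subgroup.one_mem _
  | @cons a b w v hab _ ih =>
      have key : red (a :: w) * (red (b :: v))⁻¹ =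
          toF a * (red w * (red v)⁻¹) * (toF a)⁻¹ * (toF a * (toF b)⁻¹) := by
        rw [red_cons, red_cons]; group
      rw [key]
      exact Subgroup.mul_mem _ (conj_mem_closure_tilde ih _) hab

lemma toF_pos (x : X) : toF (pos x) = FreeGroup.of x := rfl

lemma toF_neg (x : X) : toF (neg x) = (FreeGroup.of x)⁻¹ := by
  show FreeGroup.mk [(x, false)] = (FreeGroup.mk [(x, true)])⁻¹
  rw [FreeGroup.inv_mk]; rfl

lemma letter_mem {d : X → X → ℝ} {x₀ : X} {ε : ℝ} (hε1 : ε < 1)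
    (a b : Letter X) (h : ext d x₀ a b < ε) :
    toF a * (toF b)⁻¹ ∈ Subgroup.closure (tilde {p : X × X | d p.1 p.2 < ε}) := by
  have hbase : ∀ g : FreeGroup X, g ∈ (j2 '' {p : X × X | d p.1 p.2 < ε} ∪
      j2s '' {p : X × X | d p.1 p.2 < ε}) →
      g ∈ Subgroup.closure (tilde {p : X × X | d p.1 p.2 < ε}) := by
    intro g hg
    refine Subgroup.subset_closure (Set.mem_iUnion.2 ⟨1, g, hg, by group⟩)
  match a, b with
  | none, none => simpa [toF] using Subgroup.one_mem _
  | some (x, true), some (y, true) =>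
      have hxy : d x y < ε := h
      exact hbase _ (Or.inr ⟨(x, y), hxy, rfl⟩)
  | some (x, false), some (y, false) =>
      have hxy : d x y < ε := h
      have : toF (some (x, false)) * (toF (some (y, false)))⁻¹ =
          (FreeGroup.of x)⁻¹ * FreeGroup.of y := by
        rw [show (some (x, false) : Letter X) = neg x from rfl,
          show (some (y, false) : Letter X) = neg y from rfl, toF_neg, toF_neg, inv_inv]
      rw [this]
      exact hbase _ (Or.inl ⟨(x, y), hxy, rfl⟩)
  | some (x, true), some (y, false) =>
      exfalso
      have he : ext d x₀ (some (x, true)) (some (y, false)) =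
          max (max (d x x₀) 1) (max (d y x₀) 1) := rfl
      rw [he] at h
      have : (1 : ℝ) ≤ max (max (d x x₀) 1) (max (d y x₀) 1) :=
        le_trans (le_max_right _ _) (le_max_left _ _)
      linarith
  | some (x, false), some (y, true) =>
      exfalso
      have he : ext d x₀ (some (x, false)) (some (y, true)) =
          max (max (d x x₀) 1) (max (d y x₀) 1) := rfl
      rw [he] at h
      have : (1 : ℝ) ≤ max (max (d x x₀) 1) (max (d y x₀) 1) :=
        le_trans (le_max_right _ _) (le_max_left _ _)
      linarith
  | some (x, b), none =>
      exfalso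
      have he : ext d x₀ (some (x, b)) none = max (d x x₀) 1 := by cases b <;> rfl
      rw [he] at h
      have : (1 : ℝ) ≤ max (d x x₀) 1 := le_max_right _ _
      linarith
  | none, some (y, b) =>
      exfalso
      have he : ext d x₀ none (some (y, b)) = max (d y x₀) 1 := by cases b <;> rfl
      rw [he] at h
      have : (1 : ℝ) ≤ max (d y x₀) 1 := le_max_right _ _
      linarith

lemma red_wordOf [DecidableEq X] (w : FreeGroup X) : red (wordOf w) = w := by
  have key : ∀ L : List (X × Bool), red (L.map some) = FreeGroup.mk L := by
    intro L
    induction L with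
    | nil => rfl
    | cons p L ih =>
        rcases p with ⟨x, b⟩
        rw [List.map_cons, red_cons, ih]
        show FreeGroup.mk [(x, b)] * FreeGroup.mk L = _
        rw [FreeGroup.mul_mk]; rfl
  rw [wordOf, key, FreeGroup.mk_toWord]

lemma red_replicate (n : ℕ) : red (List.replicate n (eL : Letter X)) = 1 := by
  simp [red, toF, eL, List.map_replicate]

lemma le_foldr_max {l : List ℝ} {x : ℝ} (hx : x ∈ l) : x ≤ l.foldr max 0 := by
  induction l with
  | nil => simp at hx
  | cons a l ih =>
      rcases List.mem_cons.1 hx with rfl | hx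
      · exact le_max_left _ _
      · exact le_trans (ih hx) (le_max_right _ _)

end Aux

/-- The inclusion `B_{δ_u}(e, ε) ⊆ [Ẽ]` from the proof of Theorem `metgr`:
if `w* = x₀⋯xₙ` and `v = y₀⋯yₙ` are words of equal length with `v' = e` and
`d(x_i, y_i) < ε` for all `i`, then `(w*)' ∈ [Ẽ]`; consequently
`B_{δ_u}(e, ε) ⊆ [Ẽ]`. -/
theorem ball_subset_closure_tilde {X : Type*} [Nonempty X]
    (d : X → X → ℝ) (hd : IsUltraMetric d) (x₀ : X)
    (ε : ℝ) (hε0 : 0 < ε) (hε1 : ε < 1) :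
    (∀ w v : List (Letter X), ∀ hlen : w.length = v.length, red v = 1 →
      (∀ i : Fin w.length, ext d x₀ (w.get i) (v.get (Fin.cast hlen i)) < ε) →
      red w ∈ Subgroup.closure (tilde {p : X × X | d p.1 p.2 < ε})) ∧
    {w : FreeGroup X | graev (ext d x₀) w 1 < ε} ⊆
      (Subgroup.closure (tilde {p : X × X | d p.1 p.2 < ε}) :
        Set (FreeGroup X)) := by
  have main : ∀ w v : List (Letter X), ∀ hlen : w.length = v.length, red v = 1 →
      (∀ i : Fin w.length, ext d x₀ (w.get i) (v.get (Fin.cast hlen i)) < ε) →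
      red w ∈ Subgroup.closure (tilde {p : X × X | d p.1 p.2 < ε}) := by
    intro w v hlen hv hclose
    have hf : List.Forall₂
        (fun a b => toF a * (toF b)⁻¹ ∈
          Subgroup.closure (tilde {p : X × X | d p.1 p.2 < ε})) w v := by
      refine List.forall₂_iff_get.2 ⟨hlen, fun i h₁ h₂ => ?_⟩
      exact letter_mem hε1 _ _ (hclose ⟨i, h₁⟩)
    have := prod_mul_inv_mem hf
    rwa [hv, inv_one, mul_one] at this
  refine ⟨main, fun w hw => ?_⟩
  classical
  set S : Set ℝ := {r : ℝ | ∃ w' v' : List (Letter X), w'.length = v'.length ∧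
    red w' = w ∧ red v' = 1 ∧ r = rho (ext d x₀) w' v'} with hS
  have hne : S.Nonempty := by
    refine ⟨rho (ext d x₀) (wordOf w) (List.replicate (wordOf w).length eL),
      wordOf w, List.replicate (wordOf w).length eL, ?_, red_wordOf w,
      red_replicate _, rfl⟩
    simp
  have hlt : sInf S < ε := hw
  obtain ⟨r, ⟨w', v', hlen, hw', hv', rfl⟩, hrε⟩ := exists_lt_of_csInf_lt hne hlt
  have hclose : ∀ i : Fin w'.length,
      ext d x₀ (w'.get i) (v'.get (Fin.cast hlen i)) < ε := by
    intro i
    have hi : (i : ℕ) < (List.zipWith (ext d x₀) w' v').length := by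
      simpa [List.length_zipWith, ← hlen] using i.isLt
    have hmem : (List.zipWith (ext d x₀) w' v').get ⟨i, hi⟩ ∈
        List.zipWith (ext d x₀) w' v' := List.get_mem _ _
    have hle := le_foldr_max hmem
    have hval : (List.zipWith (ext d x₀) w' v').get ⟨i, hi⟩ =
        ext d x₀ (w'.get i) (v'.get (Fin.cast hlen i)) := by
      simp [List.get_eq_getElem, List.getElem_zipWith]
    rw [hval] at hle
    exact lt_of_le_of_lt hle hrε
  have := main w' v' hlen hv' hclose
  rwa [hw'] at this

end GraevStmt
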